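/- Suppose c = (c_0, …, c_n) ∈ 𝔠₊(N) and P ∈ 𝔓₊(N). Then there exists a unique Q ∈ 𝔓₊(N) such that the rational function Φ := P/Q on the discrete unit circle satisfies the moment conditions (1/2N) Σ_{j=−N+1}^N ζ_j^k P(ζ_j)/Q(ζ_j) = c_k for k = 0, 1, …, n. -/

import Mathlib

open Finset Complex Matrix

noncomputable section

/-- The point `ζ_j = exp(iπ j / N)` of the discrete unit circle `𝕋_{2N}`. -/
def zeta (N : ℕ) (j : ℤ) : ℂ := Complex.exp (Real.pi * Complex.I * j / N)

/-- The index set `j = -N+1, …, N`. -/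
def Idx (N : ℕ) : Finset ℤ := Finset.Icc (-(N : ℤ) + 1) (N : ℤ)

/-- The symmetric pseudo-polynomial `Σ_{k=-n}^n p_{|k|} ζ^{-k}`
(equals `p 0 + Σ_{k=1}^n p k (ζ^k + ζ^{-k})`). -/
def ppC {n : ℕ} (p : Fin (n + 1) → ℝ) (z : ℂ) : ℂ :=
  ∑ k : Fin (n + 1), (p k : ℂ) * (z ^ (k.val : ℤ) + z ^ (-(k.val : ℤ))) - (p 0 : ℂ)

/-- Membership in the cone `𝔓₊(N)`: positivity on the discrete unit circle. -/
def memPplus (N : ℕ) {n : ℕ} (p : Fin (n + 1) → ℝ) : Prop :=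
  ∀ j ∈ Idx N, 0 < (ppC p (zeta N j)).re

/-- The pairing `⟨c, p⟩ = Σ_{k=-n}^n c_{|k|} p_{|k|}`. -/
def pairCP {n : ℕ} (c p : Fin (n + 1) → ℝ) : ℝ :=
  2 * ∑ k : Fin (n + 1), c k * p k - c 0 * p 0

/-- Membership in the dual cone `𝔠₊(N)`. -/
def memCplus (N : ℕ) {n : ℕ} (c : Fin (n + 1) → ℝ) : Prop :=
  ∀ p : Fin (n + 1) → ℝ, p ≠ 0 →
    (∀ j ∈ Idx N, 0 ≤ (ppC p (zeta N j)).re) → 0 < pairCP c p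

/-!
The moment conditions say exactly that `Q` is a critical point of the logarithmic barrier
`J(q) = 2N ⟨c, q⟩ - Σ_j P(ζ_j) log q(ζ_j)` on the open cone `𝔓₊(N)`; here one uses that the
moments of the even, `2N`-periodic function `j ↦ P(ζ_j) / Q(ζ_j)` are real. Since `c ∈ 𝔠₊(N)`,
`⟨c, q⟩ ≥ δ ‖q‖` on the closed cone, so the log terms cannot compensate the linear growth and the
sublevel sets of `J` in the open cone are compact: `J` attains its minimum, at a critical point.
`J` is strictly convex in the values `q(ζ_j)`, which determine `q` when `n < N` by orthogonality
of the characters of `𝕋_{2N}`; hence the critical point is unique.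
-/

open Function

section LogBarrier

variable {ι V : Type*} [NormedAddCommGroup V] [NormedSpace ℝ V]
  (ℓ : V →L[ℝ] ℝ) (s : Finset ι) (w : ι → ℝ) (L : ι → V →L[ℝ] ℝ)

def logBarrier (v : V) : ℝ :=
  ℓ v - ∑ i ∈ s, w i * Real.log (L i v)

variable {ℓ s w L}

lemma isClosed_setOf_forall_le (a : ι → ℝ) : IsClosed {v : V | ∀ i ∈ s, a i ≤ L i v} := by
  simp only [Set.ofPred_forall]
  exact isClosed_biInter fun i _ => isClosed_le continuous_const (L i).continuous

lemma exists_pos_mul_norm_le [ProperSpace V]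
    (hℓ : ∀ v, v ≠ 0 → (∀ i ∈ s, 0 ≤ L i v) → 0 < ℓ v) :
    ∃ δ > 0, ∀ v, (∀ i ∈ s, 0 ≤ L i v) → δ * ‖v‖ ≤ ℓ v := by
  obtain ⟨δ, hδ, hle⟩ :=
    ((isCompact_sphere (0 : V) 1).inter_left (isClosed_setOf_forall_le 0)).exists_forall_le'
    ℓ.continuous.continuousOn fun v hv => hℓ v (ne_zero_of_mem_unit_sphere ⟨v, hv.2⟩) hv.1
  refine ⟨δ, hδ, fun v hv => ?_⟩
  rcases eq_or_ne v 0 with rfl | hv0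
  · simp
  have hnorm : 0 < ‖v‖ := norm_pos_iff.2 hv0
  have hunit := hle (‖v‖⁻¹ • v) ⟨fun i hi => by
    rw [map_smul, smul_eq_mul]
    exact mul_nonneg (inv_nonneg.2 hnorm.le) (hv i hi), by simp [norm_smul, hnorm.ne']⟩
  rw [map_smul, smul_eq_mul, le_inv_mul_iff₀ hnorm] at hunit
  linarith

lemma exists_norm_le_of_logBarrier_le (hw : ∀ i ∈ s, 0 ≤ w i) {δ : ℝ} (hδ : 0 < δ)
    (hℓ : ∀ v, (∀ i ∈ s, 0 ≤ L i v) → δ * ‖v‖ ≤ ℓ v) (α : ℝ) :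
    ∃ M, ∀ v, (∀ i ∈ s, 0 < L i v) → logBarrier ℓ s w L v ≤ α → ‖v‖ ≤ M := by
  set A := ∑ i ∈ s, w i * ‖L i‖
  have hA : 0 ≤ A := sum_nonneg fun i hi => mul_nonneg (hw i hi) (norm_nonneg _)
  -- `log x ≤ a x - 1 - log a`, and this `a` makes the log terms absorb at most `δ ‖v‖ / 2`.
  set a := δ / (2 * (A + 1))
  have ha : 0 < a := by positivity
  have haA : a * A ≤ δ / 2 := by
    rw [div_mul_eq_mul_div, div_le_div_iff₀ (by positivity) two_pos]
    nlinarith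
  refine ⟨2 * (α - (1 + Real.log a) * ∑ i ∈ s, w i) / δ, fun v hv hJ => ?_⟩
  have hlog : ∀ i ∈ s, w i * Real.log (L i v) ≤ w i * (a * ‖L i‖ * ‖v‖ - 1 - Real.log a) :=
    fun i hi => by
      refine mul_le_mul_of_nonneg_left ?_ (hw i hi)
      have h1 := Real.log_le_sub_one_of_pos (mul_pos ha (hv i hi))
      rw [Real.log_mul ha.ne' (hv i hi).ne'] at h1
      have h2 := (le_abs_self _).trans ((L i).le_opNorm v)
      nlinarith
  have hsum : ∑ i ∈ s, w i * (a * ‖L i‖ * ‖v‖ - 1 - Real.log a) =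
      a * A * ‖v‖ - (1 + Real.log a) * ∑ i ∈ s, w i := by
    simp only [A, mul_sum, sum_mul, ← sum_sub_distrib]
    exact sum_congr rfl fun _ _ => by ring
  have hδv := hℓ v fun i hi => (hv i hi).le
  have hS := (sum_le_sum hlog).trans_eq hsum
  rw [le_div_iff₀ hδ]
  unfold logBarrier at hJ
  nlinarith [mul_le_mul_of_nonneg_right haA (norm_nonneg v)]

lemma exp_le_of_logBarrier_le (hw : ∀ i ∈ s, 0 < w i)
    (hℓ : ∀ v, (∀ i ∈ s, 0 ≤ L i v) → 0 ≤ ℓ v) {v : V} (hv : ∀ i ∈ s, 0 < L i v) {α M : ℝ}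
    (hJ : logBarrier ℓ s w L v ≤ α) (hM : ‖v‖ ≤ M) {i : ι} (hi : i ∈ s) :
    Real.exp (-(α + M * ∑ i ∈ s, w i * ‖L i‖) / w i) ≤ L i v := by
  classical
  have hM0 : 0 ≤ M := (norm_nonneg v).trans hM
  have hrest : ∑ i' ∈ s.erase i, w i' * Real.log (L i' v) ≤ M * ∑ i ∈ s, w i * ‖L i‖ := calc
    _ ≤ ∑ i' ∈ s.erase i, w i' * (‖L i'‖ * M) := sum_le_sum fun i' hi' => by
        have hi's := mem_of_mem_erase hi'
        refine mul_le_mul_of_nonneg_left ?_ (hw i' hi's).le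
        calc Real.log (L i' v) ≤ L i' v := Real.log_le_self (hv i' hi's).le
          _ ≤ ‖L i'‖ * ‖v‖ := (le_abs_self _).trans ((L i').le_opNorm v)
          _ ≤ ‖L i'‖ * M := by gcongr
    _ ≤ ∑ i' ∈ s, w i' * (‖L i'‖ * M) := sum_le_sum_of_subset_of_nonneg (erase_subset _ _)
        fun i' hi' _ => mul_nonneg (hw i' hi').le (by positivity)
    _ = M * ∑ i ∈ s, w i * ‖L i‖ := by
        rw [mul_sum]
        exact sum_congr rfl fun _ _ => by ring
  rw [logBarrier, ← add_sum_erase s _ hi] at hJ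
  have := hℓ v fun i hi => (hv i hi).le
  rw [← Real.le_log_iff_exp_le (hv i hi), div_le_iff₀ (hw i hi)]
  linarith

theorem exists_isMinOn_logBarrier [ProperSpace V] (hw : ∀ i ∈ s, 0 < w i)
    (hℓ : ∀ v, v ≠ 0 → (∀ i ∈ s, 0 ≤ L i v) → 0 < ℓ v) {v₀ : V} (hv₀ : ∀ i ∈ s, 0 < L i v₀) :
    ∃ v, (∀ i ∈ s, 0 < L i v) ∧ IsMinOn (logBarrier ℓ s w L) {u | ∀ i ∈ s, 0 < L i u} v := by
  obtain ⟨δ, hδ, hδℓ⟩ := exists_pos_mul_norm_le hℓ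
  set J := logBarrier ℓ s w L
  obtain ⟨M, hM⟩ :=
    exists_norm_le_of_logBarrier_le (fun i hi => (hw i hi).le) hδ hδℓ (J v₀)
  set T := Metric.closedBall (0 : V) M ∩
    {u | ∀ i ∈ s, Real.exp (-(J v₀ + M * ∑ i ∈ s, w i * ‖L i‖) / w i) ≤ L i u}
  have hT : ∀ u, (∀ i ∈ s, 0 < L i u) → J u ≤ J v₀ → u ∈ T := fun u hu hJu =>
    ⟨mem_closedBall_zero_iff.2 (hM u hu hJu), fun i hi => exp_le_of_logBarrier_le hw
      (fun v hv => (mul_nonneg hδ.le (norm_nonneg v)).trans (hδℓ v hv)) hu hJu (hM u hu hJu) hi⟩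
  have hTpos : ∀ u ∈ T, ∀ i ∈ s, 0 < L i u := fun u hu i hi =>
    (Real.exp_pos _).trans_le (hu.2 i hi)
  have hTc : IsCompact T := (isCompact_closedBall 0 M).inter_right (isClosed_setOf_forall_le _)
  have hJc : ContinuousOn J T := ℓ.continuous.continuousOn.sub <| continuousOn_finsetSum s
    fun i hi => continuousOn_const.mul <|
      (L i).continuous.continuousOn.log fun u hu => (hTpos u hu i hi).ne'
  obtain ⟨v, hvT, hvmin⟩ := hTc.exists_isMinOn ⟨v₀, hT v₀ hv₀ le_rfl⟩ hJc
  refine ⟨v, hTpos v hvT, isMinOn_iff.2 fun u hu => ?_⟩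
  by_cases hJu : J u ≤ J v₀
  · exact hvmin (hT u hu hJu)
  · exact (hvmin (hT v₀ hv₀ le_rfl)).trans (not_le.1 hJu).le

theorem IsMinOn.logBarrier_eq_sum {v : V} (hv : ∀ i ∈ s, 0 < L i v)
    (hmin : IsMinOn (logBarrier ℓ s w L) {u | ∀ i ∈ s, 0 < L i u} v) :
    ℓ = ∑ i ∈ s, (w i / L i v) • L i := by
  have hopen : IsOpen {u | ∀ i ∈ s, 0 < L i u} := by
    simp only [Set.ofPred_forall]
    exact isOpen_biInter_finset fun i _ => isOpen_lt continuous_const (L i).continuous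
  have hderiv : HasFDerivAt (logBarrier ℓ s w L) (ℓ - ∑ i ∈ s, w i • (L i v)⁻¹ • L i) v :=
    ℓ.hasFDerivAt.sub <| HasFDerivAt.fun_sum fun i hi =>
      ((L i).hasFDerivAt.log (hv i hi).ne').const_mul (w i)
  simpa only [smul_smul, div_eq_mul_inv] using
    sub_eq_zero.1 ((hmin.isLocalMin (hopen.mem_nhds hv)).hasFDerivAt_eq_zero hderiv)

theorem eq_of_sum_div_smul_eq (hw : ∀ i ∈ s, 0 < w i)
    (hL : ∀ v, (∀ i ∈ s, L i v = 0) → v = 0) {v₁ v₂ : V}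
    (h₁ : ∀ i ∈ s, 0 < L i v₁) (h₂ : ∀ i ∈ s, 0 < L i v₂)
    (h : ∑ i ∈ s, (w i / L i v₁) • L i = ∑ i ∈ s, (w i / L i v₂) • L i) : v₁ = v₂ := by
  have happ := congrArg (fun f : V →L[ℝ] ℝ => f (v₁ - v₂)) h
  simp only [_root_.sum_apply, _root_.smul_apply, smul_eq_mul] at happ
  have hsum : ∑ i ∈ s, w i * (L i v₁ - L i v₂) ^ 2 / (L i v₁ * L i v₂) = 0 := calc
    _ = ∑ i ∈ s, (w i / L i v₂ * L i (v₁ - v₂) - w i / L i v₁ * L i (v₁ - v₂)) :=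
        sum_congr rfl fun i hi => by
          rw [map_sub]
          field_simp [(h₁ i hi).ne', (h₂ i hi).ne']
    _ = 0 := by rw [sum_sub_distrib, happ, sub_self]
  have hterm := (sum_eq_zero_iff_of_nonneg fun i hi => div_nonneg
    (mul_nonneg (hw i hi).le (sq_nonneg _)) (mul_pos (h₁ i hi) (h₂ i hi)).le).1 hsum
  refine sub_eq_zero.1 (hL _ fun i hi => ?_)
  rw [map_sub]
  simpa [(hw i hi).ne', (h₁ i hi).ne', (h₂ i hi).ne'] using hterm i hi

end LogBarrier

lemma zeta_ne_zero (N : ℕ) (j : ℤ) : zeta N j ≠ 0 := Complex.exp_ne_zero _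

lemma zeta_add (N : ℕ) (i j : ℤ) : zeta N (i + j) = zeta N i * zeta N j := by
  rw [zeta, zeta, zeta, ← Complex.exp_add]
  congr 1
  push_cast
  ring

lemma zeta_zpow (N : ℕ) (j m : ℤ) : zeta N j ^ m = zeta N (j * m) := by
  rw [zeta, zeta, ← Complex.exp_int_mul]
  congr 1
  push_cast
  ring

lemma zeta_neg (N : ℕ) (j : ℤ) : zeta N (-j) = (zeta N j)⁻¹ := by
  rw [zeta, zeta, ← Complex.exp_neg]
  congr 1
  push_cast
  ring

lemma conj_zeta (N : ℕ) (j : ℤ) : starRingEnd ℂ (zeta N j) = zeta N (-j) := by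
  rw [zeta, zeta, ← Complex.exp_conj]
  congr 1
  simp only [map_div₀, map_mul, Complex.conj_ofReal, Complex.conj_I, map_intCast, map_natCast]
  push_cast
  ring

lemma zeta_eq_one_iff {N : ℕ} (hN : N ≠ 0) (m : ℤ) : zeta N m = 1 ↔ 2 * (N : ℤ) ∣ m := by
  have hω : IsPrimitiveRoot (zeta N 1) (2 * N) := by
    convert Complex.isPrimitiveRoot_exp (2 * N) (by positivity) using 2
    rw [zeta]
    push_cast
    field_simp
  rw [show zeta N m = zeta N 1 ^ m by rw [zeta_zpow, one_mul], hω.zpow_eq_one_iff_dvd]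
  push_cast
  rfl

lemma zeta_periodic {N : ℕ} (hN : N ≠ 0) : Periodic (zeta N) (2 * N) := fun j => by
  rw [zeta_add, (zeta_eq_one_iff hN _).2 dvd_rfl, mul_one]

lemma sum_Idx_comp_add_one {M : Type*} [AddCommMonoid M] {N : ℕ} {f : ℤ → M}
    (hf : Periodic f (2 * N)) : ∑ j ∈ Idx N, f (j + 1) = ∑ j ∈ Idx N, f j := by
  refine Finset.sum_nbij' (fun j => if j = N then -N + 1 else j + 1)
    (fun j => if j = -N + 1 then N else j - 1) ?_ ?_ ?_ ?_ fun j _ => ?_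
  iterate 4 (intro j hj; simp only [Idx, Finset.mem_Icc] at hj ⊢; split_ifs <;> omega)
  split_ifs with h
  · rw [h, ← hf (-N + 1)]
    ring_nf
  · rfl

lemma sum_Idx_comp_neg {M : Type*} [AddCommMonoid M] {N : ℕ} {f : ℤ → M}
    (hf : Periodic f (2 * N)) : ∑ j ∈ Idx N, f (-j) = ∑ j ∈ Idx N, f j := by
  refine Finset.sum_nbij' (fun j => if j = N then N else -j)
    (fun j => if j = N then N else -j) ?_ ?_ ?_ ?_ fun j _ => ?_
  iterate 4 (intro j hj; simp only [Idx, Finset.mem_Icc] at hj ⊢; split_ifs <;> omega)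
  split_ifs with h
  · rw [h, ← hf (-N)]
    ring_nf
  · rfl

lemma sum_zeta_zpow {N : ℕ} (hN : N ≠ 0) {m : ℤ} (hm : |m| < 2 * N) :
    ∑ j ∈ Idx N, zeta N j ^ m = if m = 0 then (2 * N : ℂ) else 0 := by
  split_ifs with hm0
  · subst hm0
    simp only [zpow_zero, sum_const, Idx, Int.card_Icc, nsmul_eq_mul, mul_one]
    rw [show ((N : ℤ) + 1 - (-N + 1)).toNat = 2 * N by omega]
    push_cast
    rfl
  · have hω : zeta N m ≠ 1 := fun h =>
      hm0 (Int.eq_zero_of_abs_lt_dvd ((zeta_eq_one_iff hN m).1 h) hm)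
    have hper : Periodic (fun j : ℤ => zeta N m ^ j) (2 * N) := fun j => by
      dsimp only
      rw [zpow_add₀ (zeta_ne_zero N m), zeta_zpow N m (2 * N),
        (zeta_eq_one_iff hN _).2 (dvd_mul_left _ _), mul_one]
    have hrot : zeta N m * ∑ j ∈ Idx N, zeta N m ^ j = ∑ j ∈ Idx N, zeta N m ^ j := by
      rw [mul_sum, ← sum_Idx_comp_add_one hper]
      exact sum_congr rfl fun j _ => by rw [zpow_add_one₀ (zeta_ne_zero N m), mul_comm]
    rw [show ∑ j ∈ Idx N, zeta N j ^ m = ∑ j ∈ Idx N, zeta N m ^ j from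
      sum_congr rfl fun j _ => by rw [zeta_zpow, zeta_zpow, mul_comm]]
    exact_mod_cast (mul_left_eq_self₀.1 hrot).resolve_left hω

lemma re_ppC {n : ℕ} (p : Fin (n + 1) → ℝ) (z : ℂ) :
    (ppC p z).re = ∑ k : Fin (n + 1), p k * (z ^ (k : ℤ) + z ^ (-(k : ℤ))).re - p 0 := by
  simp [ppC, Complex.re_sum]

lemma ppC_inv {n : ℕ} (p : Fin (n + 1) → ℝ) (z : ℂ) : ppC p z⁻¹ = ppC p z := by
  simp only [ppC, _root_.inv_zpow', neg_neg, add_comm]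

lemma conj_ppC {n : ℕ} (p : Fin (n + 1) → ℝ) (z : ℂ) :
    starRingEnd ℂ (ppC p z) = ppC p (starRingEnd ℂ z) := by
  simp [ppC, map_sum]

lemma ppC_zeta_neg {n : ℕ} (p : Fin (n + 1) → ℝ) (N : ℕ) (j : ℤ) :
    ppC p (zeta N (-j)) = ppC p (zeta N j) := by
  rw [zeta_neg, ppC_inv]

lemma ofReal_re_ppC_zeta {n : ℕ} (p : Fin (n + 1) → ℝ) (N : ℕ) (j : ℤ) :
    ((ppC p (zeta N j)).re : ℂ) = ppC p (zeta N j) :=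
  Complex.conj_eq_iff_re.1 (by rw [conj_ppC, conj_zeta, ppC_zeta_neg])

lemma re_zeta_zpow_add_zpow_neg (N : ℕ) (j k : ℤ) :
    (zeta N j ^ k + zeta N j ^ (-k)).re = 2 * (zeta N j ^ k).re := by
  rw [← _root_.inv_zpow', ← zeta_neg, ← conj_zeta, ← map_zpow₀, Complex.add_re, Complex.conj_re]
  ring

def gridEval (N : ℕ) {n : ℕ} (j : ℤ) : (Fin (n + 1) → ℝ) →L[ℝ] ℝ :=
  LinearMap.toContinuousLinearMap
    { toFun := fun p => (ppC p (zeta N j)).re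
      map_add' := fun p q => by
        simp only [re_ppC, Pi.add_apply, add_mul, sum_add_distrib]
        ring
      map_smul' := fun t p => by
        simp only [re_ppC, Pi.smul_apply, smul_eq_mul, mul_assoc, ← mul_sum, RingHom.id_apply]
        ring }

lemma gridEval_apply (N : ℕ) {n : ℕ} (j : ℤ) (p : Fin (n + 1) → ℝ) :
    gridEval N j p = (ppC p (zeta N j)).re :=
  rfl

lemma gridEval_neg (N : ℕ) {n : ℕ} (j : ℤ) (p : Fin (n + 1) → ℝ) :
    gridEval N (-j) p = gridEval N j p := by
  rw [gridEval_apply, gridEval_apply, ppC_zeta_neg]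

lemma gridEval_periodic {N : ℕ} (hN : N ≠ 0) {n : ℕ} (p : Fin (n + 1) → ℝ) :
    Periodic (fun j => gridEval N j p) (2 * N) := fun j => by
  simp only [gridEval_apply, zeta_periodic hN j]

def pairing {n : ℕ} (c : Fin (n + 1) → ℝ) : (Fin (n + 1) → ℝ) →L[ℝ] ℝ :=
  LinearMap.toContinuousLinearMap
    { toFun := pairCP c
      map_add' := fun p q => by
        simp only [pairCP, Pi.add_apply, mul_add, sum_add_distrib]
        ring
      map_smul' := fun t p => by
        simp only [pairCP, Pi.smul_apply, smul_eq_mul, RingHom.id_apply, mul_sum]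
        simp only [mul_left_comm (c _) t, ← mul_sum]
        ring }

lemma pairing_apply {n : ℕ} (c p : Fin (n + 1) → ℝ) : pairing c p = pairCP c p :=
  rfl

lemma pairing_smul {n : ℕ} (t : ℝ) (c : Fin (n + 1) → ℝ) : pairing (t • c) = t • pairing c := by
  ext p
  simp only [pairing_apply, _root_.smul_apply, pairCP, Pi.smul_apply, smul_eq_mul,
    mul_assoc, ← mul_sum]
  ring

lemma pairing_single_one {n : ℕ} (c : Fin (n + 1) → ℝ) (k : Fin (n + 1)) :
    pairing c (Pi.single k 1) = if k = 0 then c 0 else 2 * c k := by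
  split_ifs with hk
  · subst hk
    simp [pairing_apply, pairCP, Pi.single_apply]
    ring
  · simp [pairing_apply, pairCP, Pi.single_apply, Ne.symm hk]

lemma pairing_injective {n : ℕ} : Injective (pairing (n := n)) := fun a b hab => by
  funext k
  have hk := congrArg (fun ℓ => ℓ (Pi.single k 1)) hab
  simp only [pairing_single_one] at hk
  split_ifs at hk with hk0
  · rw [hk0, hk]
  · linarith

def gridMoment (N : ℕ) (x : ℤ → ℝ) (k : ℤ) : ℂ :=
  ∑ j ∈ Idx N, zeta N j ^ k * (x j : ℂ)

lemma im_gridMoment {N : ℕ} (hN : N ≠ 0) {x : ℤ → ℝ} (hper : Periodic x (2 * N))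
    (heven : x.Even) (k : ℤ) : (gridMoment N x k).im = 0 := by
  have hf : Periodic (fun j => zeta N j ^ k * (x j : ℂ)) (2 * N) := fun j => by
    simp only [zeta_periodic hN j, hper j]
  rw [← Complex.conj_eq_iff_im, gridMoment, map_sum, ← sum_Idx_comp_neg hf]
  refine sum_congr rfl fun j _ => ?_
  rw [map_mul, Complex.conj_ofReal, map_zpow₀, conj_zeta, heven]

lemma sum_smul_gridEval (N : ℕ) {n : ℕ} (x : ℤ → ℝ) :
    ∑ j ∈ Idx N, x j • (gridEval N j : (Fin (n + 1) → ℝ) →L[ℝ] ℝ) =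
      pairing fun k => (gridMoment N x k).re := by
  refine ContinuousLinearMap.ext fun u => ?_
  simp only [FunLike.coe_sum, Finset.sum_apply, _root_.smul_apply, gridEval_apply,
    re_ppC, re_zeta_zpow_add_zpow_neg, pairing_apply, pairCP, gridMoment, Complex.re_sum,
    Complex.re_mul_ofReal, smul_eq_mul, Fin.val_zero, Nat.cast_zero, zpow_zero, Complex.one_re,
    one_mul, mul_sub, mul_sum, sum_mul, sum_sub_distrib]
  rw [sum_comm]
  congr 1
  exact sum_congr rfl fun _ _ => sum_congr rfl fun _ _ => by ring

lemma gridMoment_gridEval {n N : ℕ} (hnN : n < N) (p : Fin (n + 1) → ℝ) (k : Fin (n + 1)) :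
    gridMoment N (fun j => gridEval N j p) k = 2 * N * p k := by
  have hN : N ≠ 0 := by omega
  have horth : ∀ m : ℤ, |m| ≤ 2 * n →
      ∑ j ∈ Idx N, zeta N j ^ m = if m = 0 then (2 * N : ℂ) else 0 := fun m hm =>
    sum_zeta_zpow hN (by omega)
  have hterm : ∀ j, zeta N j ^ (k : ℤ) * ppC p (zeta N j) = ∑ k' : Fin (n + 1),
      (p k' : ℂ) * (zeta N j ^ ((k : ℤ) + k') + zeta N j ^ ((k : ℤ) - k')) -
        p 0 * zeta N j ^ (k : ℤ) := fun j => by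
    simp only [ppC, mul_sub, mul_sum, sub_eq_add_neg (k : ℤ), zpow_add₀ (zeta_ne_zero N j)]
    ring_nf
  have hk := k.is_le
  have hbound : ∀ k' : Fin (n + 1), |(k : ℤ) + k'| ≤ 2 * n ∧ |(k : ℤ) - k'| ≤ 2 * n := fun k' => by
    have := k'.is_le
    simp only [abs_le]
    omega
  simp only [gridMoment, gridEval_apply, ofReal_re_ppC_zeta, hterm]
  rw [sum_sub_distrib, sum_comm, ← mul_sum, horth k (by rw [abs_le]; omega)]
  simp only [← mul_sum, sum_add_distrib]
  rw [sum_congr rfl fun k' _ => by rw [horth _ (hbound k').1, horth _ (hbound k').2]]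
  have hcond : ∀ k' : Fin (n + 1),
      ((k : ℤ) + k' = 0 ↔ k' = 0 ∧ k = 0) ∧ ((k : ℤ) - k' = 0 ↔ k' = k) := fun k' => by
    simp only [Fin.ext_iff, Fin.val_zero]
    omega
  have hk0 : (k : ℤ) = 0 ↔ k = 0 := by simp only [Fin.ext_iff, Fin.val_zero]; omega
  simp only [hcond, hk0, mul_add, sum_add_distrib, mul_ite, mul_zero, ite_and, sum_ite_eq',
    mem_univ, if_true]
  split_ifs <;> ring

lemma eq_zero_of_gridEval_eq_zero {n N : ℕ} (hnN : n < N) {p : Fin (n + 1) → ℝ}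
    (hp : ∀ j ∈ Idx N, gridEval N j p = 0) : p = 0 := by
  funext k
  have h := gridMoment_gridEval hnN p k
  rw [gridMoment, sum_eq_zero fun j hj => by rw [hp j hj, Complex.ofReal_zero, mul_zero]] at h
  have h2N : (2 * N : ℂ) ≠ 0 := by
    norm_cast
    omega
  exact_mod_cast (mul_eq_zero.1 h.symm).resolve_left h2N

lemma gridMoment_div_eq_iff {n N : ℕ} (hN : N ≠ 0) {x : ℤ → ℝ} (hper : Periodic x (2 * N))
    (heven : x.Even) (c : Fin (n + 1) → ℝ) :
    (∀ k : Fin (n + 1), gridMoment N x k / (2 * N) = c k) ↔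
      (2 * N : ℝ) • pairing c = ∑ j ∈ Idx N, x j • gridEval N j := by
  have h2N : (2 * N : ℂ) ≠ 0 := by
    norm_cast
    omega
  rw [sum_smul_gridEval, ← pairing_smul, pairing_injective.eq_iff, funext_iff]
  refine forall_congr' fun k => ?_
  rw [div_eq_iff h2N, Complex.ext_iff]
  simp [im_gridMoment hN hper heven, eq_comm, mul_comm]

theorem stmt0_general (N n : ℕ) (hNn : n < N)
    (c P : Fin (n + 1) → ℝ) (hc : memCplus N c) (hP : memPplus N P) :
    ∃! Q : Fin (n + 1) → ℝ, memPplus N Q ∧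
      ∀ k : Fin (n + 1),
        (∑ j ∈ Idx N, zeta N j ^ (k.val : ℤ) *
            (((ppC P (zeta N j)).re / (ppC Q (zeta N j)).re : ℝ) : ℂ)) / (2 * N)
          = (c k : ℂ) := by
  have hN : N ≠ 0 := by omega
  have h2N : (0 : ℝ) < 2 * N := by
    norm_cast
    omega
  have hmoments (Q : Fin (n + 1) → ℝ) :=
    gridMoment_div_eq_iff hN ((gridEval_periodic hN P).div (gridEval_periodic hN Q))
      (fun j => by simp only [Pi.div_apply, gridEval_neg]) c
  obtain ⟨Q, hQ, hmin⟩ := exists_isMinOn_logBarrier (ℓ := (2 * N : ℝ) • pairing c)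
    (s := Idx N) (w := fun j => gridEval N j P) (L := gridEval N) hP
    (fun v hv hv' => mul_pos h2N (hc v hv hv')) hP
  have hcrit := hmin.logBarrier_eq_sum hQ
  refine ⟨Q, ⟨hQ, (hmoments Q).2 hcrit⟩, fun Q' ⟨hQ', hmom'⟩ => ?_⟩
  exact eq_of_sum_div_smul_eq hP (fun v => eq_zero_of_gridEval_eq_zero hNn) hQ' hQ
    (((hmoments Q').1 hmom').symm.trans hcrit)

/-- existence and uniqueness of `Q ∈ 𝔓₊(N)` such that `Φ = P/Q`
matches the covariance data `c_0, …, c_n`. -/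
theorem stmt0 (N n : ℕ) (hn : 1 ≤ n) (hNn : n < N)
    (c P : Fin (n + 1) → ℝ) (hc : memCplus N c) (hP : memPplus N P) :
    ∃! Q : Fin (n + 1) → ℝ, memPplus N Q ∧
      ∀ k : Fin (n + 1),
        (∑ j ∈ Idx N, zeta N j ^ (k.val : ℤ) *
            (((ppC P (zeta N j)).re / (ppC Q (zeta N j)).re : ℝ) : ℂ)) / (2 * N)
          = (c k : ℂ) :=
  stmt0_general N n hNn c P hc hP

end
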